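/- arXiv:1004.3595 — 5 statements merged into one kernel-verified Lean document; each statement's English description precedes it below -/
import Mathlib

section
/- If A and B are colored subspaces of a colored vector space V, then A ∩ B and A + B are colored, and the signature satisfies ξ(A + B) + ξ(A ∩ B) = ξ(A) + ξ(B). -/
/-!
Write `Uᵢ := U ⊓ Vc i`. Independence of the colours gives `∑ i, dim Uᵢ ≤ dim U` for every
subspace `U`, and the modular law in each colour, with `Aᵢ ⊔ Bᵢ ≤ (A ⊔ B)ᵢ`, gives
`dim Aᵢ + dim Bᵢ ≤ dim (A ⊔ B)ᵢ + dim (A ⊓ B)ᵢ`. Since `A` and `B` are colored,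
`∑ i, (dim Aᵢ + dim Bᵢ) = dim A + dim B = dim (A ⊔ B) + dim (A ⊓ B)
  ≥ ∑ i, (dim (A ⊔ B)ᵢ + dim (A ⊓ B)ᵢ) ≥ ∑ i, (dim Aᵢ + dim Bᵢ)`,
so every one of these inequalities is an equality.
-/

open Module Submodule

section

variable {K V : Type*} [DivisionRing K] [AddCommGroup V] [Module K V] [FiniteDimensional K V]

theorem iSupIndep.finrank_iSup {ι : Type*} [Fintype ι] {W : ι → Submodule K V}
    (hW : iSupIndep W) : finrank K ↥(⨆ i, W i) = ∑ i, finrank K ↥(W i) := by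
  classical
  rw [iSup_eq_range_dfinsupp_lsum, LinearMap.finrank_range_of_inj hW.dfinsupp_lsum_injective]
  exact finrank_directSum K fun i => W i

theorem iSupIndep.sum_finrank_inf_le {ι : Type*} [Fintype ι] {W : ι → Submodule K V}
    (hW : iSupIndep W) (U : Submodule K V) : ∑ i, finrank K ↥(U ⊓ W i) ≤ finrank K U := by
  rw [← (hW.mono fun i => inf_le_right).finrank_iSup]
  exact finrank_mono (iSup_le fun i => inf_le_left)

theorem Submodule.finrank_inf_add_finrank_inf_le (A B W : Submodule K V) :
    finrank K ↥(A ⊓ W) + finrank K ↥(B ⊓ W) ≤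
      finrank K ↥((A ⊔ B) ⊓ W) + finrank K ↥(A ⊓ B ⊓ W) := by
  rw [← finrank_sup_add_finrank_inf_eq, inf_inf_inf_comm, inf_idem]
  exact Nat.add_le_add_right
    (finrank_mono (sup_le (inf_le_inf_right W le_sup_left) (inf_le_inf_right W le_sup_right))) _

end

/-- If `A` and `B` are colored subspaces of a colored vector space `V`,
then `A ⊓ B` and `A ⊔ B` are colored, and `ξ(A ⊔ B) + ξ(A ⊓ B) = ξ(A) + ξ(B)`. -/
theorem colored_inf_sup_signature
    {𝕜 V : Type*} [Field 𝕜] [AddCommGroup V] [Module 𝕜 V] [FiniteDimensional 𝕜 V]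
    {n : ℕ} (Vc : Fin n → Submodule 𝕜 V) (hV : DirectSum.IsInternal Vc)
    (A B : Submodule 𝕜 V)
    (hA : finrank 𝕜 ↥A = ∑ i, finrank 𝕜 ↥(A ⊓ Vc i))
    (hB : finrank 𝕜 ↥B = ∑ i, finrank 𝕜 ↥(B ⊓ Vc i)) :
    (finrank 𝕜 ↥(A ⊓ B) = ∑ i, finrank 𝕜 ↥(A ⊓ B ⊓ Vc i)) ∧
    (finrank 𝕜 ↥(A ⊔ B) = ∑ i, finrank 𝕜 ↥((A ⊔ B) ⊓ Vc i)) ∧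
    (∀ i, finrank 𝕜 ↥((A ⊔ B) ⊓ Vc i) + finrank 𝕜 ↥(A ⊓ B ⊓ Vc i)
        = finrank 𝕜 ↥(A ⊓ Vc i) + finrank 𝕜 ↥(B ⊓ Vc i)) := by
  have hVc := hV.submodule_iSupIndep
  have hle_inf := hVc.sum_finrank_inf_le (A ⊓ B)
  have hle_sup := hVc.sum_finrank_inf_le (A ⊔ B)
  have hle_pointwise := fun i => Submodule.finrank_inf_add_finrank_inf_le A B (Vc i)
  have hle_sum := Finset.sum_le_sum fun i (_ : i ∈ Finset.univ) => hle_pointwise i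
  rw [Finset.sum_add_distrib, Finset.sum_add_distrib] at hle_sum
  have hmod := finrank_sup_add_finrank_inf_eq A B
  have hsum : ∑ i, (finrank 𝕜 ↥(A ⊓ Vc i) + finrank 𝕜 ↥(B ⊓ Vc i)) =
      ∑ i, (finrank 𝕜 ↥((A ⊔ B) ⊓ Vc i) + finrank 𝕜 ↥(A ⊓ B ⊓ Vc i)) := by
    rw [Finset.sum_add_distrib, Finset.sum_add_distrib]
    omega
  refine ⟨by omega, by omega, fun i => ?_⟩
  exact ((Finset.sum_eq_sum_iff_of_le fun i _ => hle_pointwise i).mp hsum i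
    (Finset.mem_univ i)).symm
end

section
/- Every σ-colored nilpotent endomorphism x of a colored vector space V, where σ is the n-cycle i ↦ i+1 mod n, admits a colored Jordan basis: a basis of V consisting of colored vectors that is x-stable (as a set, with x sending each basis vector to another basis vector or to 0) and contains a basis of ker x. -/
/-!
Colored vectors are the homogeneous elements of the decomposition `V = ⨁ i, Vc i`, and `x` shifts
degrees by the bijection `i ↦ i + 1`; hence a homogeneous vector of `x(W)`, for `W` homogeneous,
has a homogeneous preimage in `W`: the matching component of any preimage.

Induct on the `x`-stable homogeneous subspaces `W`, ordered by inclusion; nilpotency makes `x(W)`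
strictly smaller. Take a colored Jordan basis `B'` of `x(W)`, add a homogeneous preimage of each
vector of `B' \ x(B')` (the chain tops), and complete `B' ∩ ker x` to a homogeneous basis of
`ker x ⊓ W`. The result spans `W`; the chain tops are as many as the chains, i.e.
`dim (ker x ⊓ x(W))`, so by rank–nullity the new set has at most `dim W` elements and is therefore
linearly independent.
-/

open Module Submodule DirectSum

section Counting

variable {𝕜 V : Type*} [DivisionRing 𝕜] [AddCommGroup V] [Module 𝕜 V]

theorem LinearIndepOn.ncard_eq_finrank_span [FiniteDimensional 𝕜 V] {s : Set V}
    (hs : LinearIndepOn 𝕜 id s) : s.ncard = finrank 𝕜 (span 𝕜 s) := by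
  have := (LinearIndependent.setFinite hs).fintype
  rw [finrank_span_set_eq_card hs, Set.ncard_eq_toFinset_card']

theorem finrank_span_le_ncard {s : Set V} (hs : s.Finite) :
    finrank 𝕜 (span 𝕜 s) ≤ s.ncard := by
  have := hs.fintype
  rw [Set.ncard_eq_toFinset_card']
  exact finrank_span_le_card s

theorem linearIndepOn_id_of_ncard_le_finrank_span {s : Set V} (hs : s.Finite)
    (h : s.ncard ≤ finrank 𝕜 (span 𝕜 s)) : LinearIndepOn 𝕜 id s := by
  have := hs.fintype
  rw [LinearIndepOn, linearIndependent_iff_card_le_finrank_span, ← Nat.card_eq_fintype_card,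
    Nat.card_coe_set_eq]
  simp only [id_eq, Subtype.range_coe_subtype, Set.ofPred_mem_eq]
  exact h

theorem LinearMap.finrank_map_add_finrank_ker_inf [FiniteDimensional 𝕜 V] {V₂ : Type*}
    [AddCommGroup V₂] [Module 𝕜 V₂] (f : V →ₗ[𝕜] V₂) (W : Submodule 𝕜 V) :
    finrank 𝕜 (W.map f) + finrank 𝕜 (ker f ⊓ W : Submodule 𝕜 V) = finrank 𝕜 W := by
  rw [← (f.domRestrict W).finrank_range_add_finrank_ker, LinearMap.range_domRestrict,
    LinearMap.ker_domRestrict, ← Submodule.finrank_map_subtype_eq, Submodule.map_comap_subtype,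
    inf_comm]

end Counting

theorem IsNilpotent.map_lt_of_ne_bot {R M : Type*} [Semiring R] [AddCommMonoid M] [Module R M]
    {x : Module.End R M} (hx : IsNilpotent x) {W : Submodule R M} (hxW : W.map x ≤ W)
    (hW : W ≠ ⊥) : W.map x < W := by
  refine lt_of_le_of_ne hxW fun h ↦ hW ?_
  have hpow : ∀ k, W.map (x ^ k) = W := by
    intro k
    induction k with
    | zero => exact Submodule.map_id W
    | succ k ih => rw [_root_.pow_succ, Module.End.mul_eq_comp, Submodule.map_comp, h, ih]
  obtain ⟨m, hm⟩ := hx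
  rw [← hpow m, hm, Submodule.map_zero]

section JordanBasis

variable {𝕜 V : Type*} [DivisionRing 𝕜] [AddCommGroup V] [Module 𝕜 V]

structure IsJordanBasis (x : Module.End 𝕜 V) (W : Submodule 𝕜 V) (B : Set V) : Prop where
  linearIndepOn : LinearIndepOn 𝕜 id B
  span_eq : span 𝕜 B = W
  mapsTo : ∀ v ∈ B, x v ∈ B ∨ x v = 0
  span_inter_ker : span 𝕜 (B ∩ LinearMap.ker x) = LinearMap.ker x ⊓ W

variable {x : Module.End 𝕜 V} {W : Submodule 𝕜 V} {B : Set V}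

theorem span_union_preimage_union_ker (hxW : W.map x ≤ W) {B' S C : Set V}
    (hB' : span 𝕜 B' = W.map x) (hSW : S ⊆ W) (hS : B' \ x '' B' ⊆ x '' S)
    (hC : span 𝕜 C = LinearMap.ker x ⊓ W) : span 𝕜 (B' ∪ S ∪ C) = W := by
  have hB'W : B' ⊆ W := fun v hv ↦ hxW (hB' ▸ subset_span hv)
  have hB'SW : span 𝕜 (B' ∪ S) ≤ W := span_le.mpr (Set.union_subset hB'W hSW)
  have hCW : C ⊆ W := fun v hv ↦ (hC ▸ subset_span hv : v ∈ LinearMap.ker x ⊓ W).2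
  refine le_antisymm (span_le.mpr (Set.union_subset (span_le.mp hB'SW) hCW)) fun v hv ↦ ?_
  have hB'im : B' ⊆ x '' (B' ∪ S) := by
    intro b hb
    by_cases hbim : b ∈ x '' B'
    · exact Set.image_mono Set.subset_union_left hbim
    · exact Set.image_mono Set.subset_union_right (hS ⟨hb, hbim⟩)
  obtain ⟨m, hm, hxm⟩ : x v ∈ (span 𝕜 (B' ∪ S)).map x := by
    rw [← span_image]
    exact span_mono hB'im (hB' ▸ mem_map_of_mem hv)
  have hvm : v - m ∈ span 𝕜 C := hC ▸ ⟨by simp [hxm], W.sub_mem hv (hB'SW hm)⟩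
  rw [← sub_add_cancel v m]
  exact add_mem (span_mono Set.subset_union_right hvm) (span_mono Set.subset_union_left hm)

variable [FiniteDimensional 𝕜 V]

theorem IsJordanBasis.ncard_eq_finrank (hB : IsJordanBasis x W B) : B.ncard = finrank 𝕜 W := by
  rw [hB.linearIndepOn.ncard_eq_finrank_span, hB.span_eq]

theorem IsJordanBasis.ncard_inter_ker (hB : IsJordanBasis x W B) :
    (B ∩ LinearMap.ker x).ncard = finrank 𝕜 (LinearMap.ker x ⊓ W : Submodule 𝕜 V) := by
  rw [(hB.linearIndepOn.mono Set.inter_subset_left).ncard_eq_finrank_span, hB.span_inter_ker]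

theorem IsJordanBasis.ncard_diff_image (hB : IsJordanBasis x W B) :
    (B \ x '' B).ncard = finrank 𝕜 (LinearMap.ker x ⊓ W : Submodule 𝕜 V) := by
  have hspan : span 𝕜 (B ∩ x '' B) = W.map x := by
    refine le_antisymm (span_le.mpr fun v hv ↦ ?_) ?_
    · rw [← hB.span_eq, ← Submodule.span_image]
      exact subset_span hv.2
    · rw [← hB.span_eq, ← Submodule.span_image, ← Submodule.span_insert_zero (s := B ∩ x '' B)]
      refine span_mono ?_
      rintro _ ⟨v, hv, rfl⟩
      rcases hB.mapsTo v hv with h | h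
      · exact Or.inr ⟨h, v, hv, rfl⟩
      · exact Or.inl h
  have hfin : B.Finite := LinearIndependent.setFinite hB.linearIndepOn
  have hcard : (B ∩ x '' B).ncard = finrank 𝕜 (W.map x) := by
    rw [← hspan]
    exact (hB.linearIndepOn.mono Set.inter_subset_left).ncard_eq_finrank_span
  rw [← Set.sdiff_self_inter, Set.ncard_sdiff Set.inter_subset_left (hfin.inter_of_left _),
    hcard, hB.ncard_eq_finrank]
  have := x.finrank_map_add_finrank_ker_inf W
  omega

theorem IsJordanBasis.union_preimage_union_ker (hxW : W.map x ≤ W) {B' S C : Set V}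
    (hB' : IsJordanBasis x (W.map x) B') (hSW : S ⊆ W) (hS : Set.BijOn x S (B' \ x '' B'))
    (hC : LinearIndepOn 𝕜 id C) (hCspan : span 𝕜 C = LinearMap.ker x ⊓ W)
    (hB'C : B' ∩ LinearMap.ker x ⊆ C) :
    IsJordanBasis x W (B' ∪ S ∪ C) := by
  have hspan := span_union_preimage_union_ker hxW hB'.span_eq hSW hS.surjOn hCspan
  have hCker : C ⊆ LinearMap.ker x := fun v hv ↦ (hCspan ▸ subset_span hv : v ∈ _ ⊓ W).1
  have hB'fin : B'.Finite := LinearIndependent.setFinite hB'.linearIndepOn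
  have hSfin : S.Finite := (hB'fin.sdiff.subset hS.image_eq.le).of_finite_image hS.injOn
  have hCfin : C.Finite := LinearIndependent.setFinite hC
  have hker_mono : finrank 𝕜 (LinearMap.ker x ⊓ W.map x : Submodule 𝕜 V)
      ≤ finrank 𝕜 (LinearMap.ker x ⊓ W : Submodule 𝕜 V) :=
    Submodule.finrank_mono (inf_le_inf_left _ hxW)
  have hcard : (B' ∪ S ∪ C).ncard ≤ finrank 𝕜 W := calc
    (B' ∪ S ∪ C).ncard ≤ (B' ∪ S ∪ (C \ (B' ∩ LinearMap.ker x))).ncard := by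
      refine Set.ncard_le_ncard ?_ ((hB'fin.union hSfin).union hCfin.sdiff)
      rw [← Set.union_sdiff_self]
      exact Set.union_subset_union_right _
        (Set.sdiff_subset_sdiff_right (Set.inter_subset_left.trans Set.subset_union_left))
    _ ≤ B'.ncard + S.ncard + (C \ (B' ∩ LinearMap.ker x)).ncard := by
      refine (Set.ncard_union_le _ _).trans (Nat.add_le_add_right (Set.ncard_union_le _ _) _)
    _ = finrank 𝕜 (W.map x) + finrank 𝕜 (LinearMap.ker x ⊓ W.map x : Submodule 𝕜 V)
        + (finrank 𝕜 (LinearMap.ker x ⊓ W : Submodule 𝕜 V)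
          - finrank 𝕜 (LinearMap.ker x ⊓ W.map x : Submodule 𝕜 V)) := by
      rw [Set.ncard_sdiff hB'C (hB'fin.inter_of_left _), hB'.ncard_eq_finrank, hB'.ncard_inter_ker,
        ← hS.injOn.ncard_image, hS.image_eq, hB'.ncard_diff_image,
        hC.ncard_eq_finrank_span, hCspan]
    _ = finrank 𝕜 W := by
      have := x.finrank_map_add_finrank_ker_inf W
      omega
  refine ⟨linearIndepOn_id_of_ncard_le_finrank_span ((hB'fin.union hSfin).union hCfin)
    (hspan ▸ hcard), hspan, ?_, ?_⟩
  · rintro v ((hv | hv) | hv)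
    · exact (hB'.mapsTo v hv).imp_left fun h ↦ Set.subset_union_left (Set.subset_union_left h)
    · exact Or.inl (Set.subset_union_left (Set.subset_union_left (hS.mapsTo hv).1))
    · exact Or.inr (hCker hv)
  · refine le_antisymm (span_le.mpr fun v hv ↦ ⟨hv.2, hspan ▸ subset_span hv.1⟩) ?_
    exact hCspan ▸ span_mono fun v hv ↦ ⟨Set.subset_union_right hv, hCker hv⟩

end JordanBasis

section Graded

variable {ι 𝕜 V : Type*} [DecidableEq ι] [DivisionRing 𝕜] [AddCommGroup V] [Module 𝕜 V]
  (𝒱 : ι → Submodule 𝕜 V) [Decomposition 𝒱]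

theorem Submodule.IsHomogeneous.span_setOf_isHomogeneousElem {K : Submodule 𝕜 V}
    (hK : K.IsHomogeneous 𝒱) : span 𝕜 {v | v ∈ K ∧ SetLike.IsHomogeneousElem 𝒱 v} = K := by
  classical
  refine le_antisymm (span_le.mpr fun v hv ↦ hv.1) fun v hv ↦ ?_
  rw [← DirectSum.sum_support_decompose 𝒱 v]
  exact sum_mem fun i _ ↦ subset_span ⟨hK i hv, i, (decompose 𝒱 v i).2⟩

theorem Submodule.IsHomogeneous.exists_linearIndepOn_extension {K : Submodule 𝕜 V}
    (hK : K.IsHomogeneous 𝒱) {C' : Set V} (hC'K : C' ⊆ K) (hC' : LinearIndepOn 𝕜 id C')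
    (hC'h : ∀ v ∈ C', SetLike.IsHomogeneousElem 𝒱 v) :
    ∃ C, C' ⊆ C ∧ LinearIndepOn 𝕜 id C ∧ span 𝕜 C = K ∧
      ∀ v ∈ C, SetLike.IsHomogeneousElem 𝒱 v := by
  obtain ⟨C, hCt, hC'C, htC, hC⟩ := exists_linearIndepOn_id_extension hC'
    (t := {v | v ∈ K ∧ SetLike.IsHomogeneousElem 𝒱 v}) fun v hv ↦ ⟨hC'K hv, hC'h v hv⟩
  refine ⟨C, hC'C, hC, le_antisymm (span_le.mpr fun v hv ↦ (hCt hv).1) ?_,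
    fun v hv ↦ (hCt hv).2⟩
  rw [← hK.span_setOf_isHomogeneousElem 𝒱]
  exact span_le.mpr htC

variable {𝒱} {σ : Equiv.Perm ι} {x : Module.End 𝕜 V}

theorem coe_decompose_apply_perm (hx : ∀ i, (𝒱 i).map x ≤ 𝒱 (σ i)) (v : V) (i : ι) :
    (decompose 𝒱 (x v) (σ i) : V) = x (decompose 𝒱 v i) := by
  induction v using DirectSum.Decomposition.inductionOn 𝒱 with
  | zero => simp
  | @homogeneous j m =>
    have hxm : x m ∈ 𝒱 (σ j) := hx j (mem_map_of_mem m.2)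
    by_cases hji : j = i
    · subst hji
      rw [decompose_of_mem_same 𝒱 hxm, decompose_of_mem_same 𝒱 m.2]
    · rw [decompose_of_mem_ne 𝒱 hxm (σ.injective.ne hji), decompose_of_mem_ne 𝒱 m.2 hji,
        map_zero]
  | add m m' hm hm' => simp [decompose_add, hm, hm']

theorem isHomogeneous_ker (hx : ∀ i, (𝒱 i).map x ≤ 𝒱 (σ i)) :
    (LinearMap.ker x).IsHomogeneous 𝒱 := by
  intro i v hv
  rw [LinearMap.mem_ker, ← coe_decompose_apply_perm hx, LinearMap.mem_ker.mp hv, decompose_zero]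
  rfl

theorem Submodule.IsHomogeneous.map (hx : ∀ i, (𝒱 i).map x ≤ 𝒱 (σ i)) {W : Submodule 𝕜 V}
    (hW : W.IsHomogeneous 𝒱) : (W.map x).IsHomogeneous 𝒱 := by
  rintro i _ ⟨w, hw, rfl⟩
  rw [← σ.apply_symm_apply i, coe_decompose_apply_perm hx]
  exact mem_map_of_mem (hW _ hw)

theorem Submodule.IsHomogeneous.surjOn_setOf_isHomogeneousElem
    (hx : ∀ i, (𝒱 i).map x ≤ 𝒱 (σ i)) {W : Submodule 𝕜 V} (hW : W.IsHomogeneous 𝒱) :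
    Set.SurjOn x {w | w ∈ W ∧ SetLike.IsHomogeneousElem 𝒱 w}
      {v | v ∈ W.map x ∧ SetLike.IsHomogeneousElem 𝒱 v} := by
  rintro _ ⟨⟨w, hw, rfl⟩, j, hj⟩
  refine ⟨decompose 𝒱 w (σ.symm j), ⟨hW _ hw, _, (decompose 𝒱 w _).2⟩, ?_⟩
  rw [← coe_decompose_apply_perm hx, σ.apply_symm_apply, decompose_of_mem_same 𝒱 hj]

theorem Submodule.IsHomogeneous.exists_isJordanBasis [FiniteDimensional 𝕜 V]
    (hx : ∀ i, (𝒱 i).map x ≤ 𝒱 (σ i)) (hnil : IsNilpotent x) {W : Submodule 𝕜 V}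
    (hW : W.IsHomogeneous 𝒱) (hxW : W.map x ≤ W) :
    ∃ B, IsJordanBasis x W B ∧ ∀ v ∈ B, SetLike.IsHomogeneousElem 𝒱 v := by
  induction W using WellFoundedLT.induction with
  | ind W ih =>
  rcases eq_or_ne W ⊥ with rfl | hW0
  · exact ⟨∅, ⟨linearIndepOn_empty _ _, by simp, by simp, by simp⟩, by simp⟩
  obtain ⟨B', hB', hB'h⟩ :=
    ih _ (hnil.map_lt_of_ne_bot hxW hW0) (hW.map hx) (map_mono hxW)
  have hsurj : Set.SurjOn x {w | w ∈ W ∧ SetLike.IsHomogeneousElem 𝒱 w} (B' \ x '' B') :=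
    Set.SurjOn.mono subset_rfl (fun v hv ↦ .intro (hB'.span_eq ▸ subset_span hv.1) (hB'h v hv.1))
      (hW.surjOn_setOf_isHomogeneousElem hx)
  obtain ⟨S, hSsub, hS⟩ := Set.surjOn_iff_exists_bijOn_subset.mp hsurj
  have hB'K : B' ∩ LinearMap.ker x ⊆ LinearMap.ker x ⊓ W := fun v hv ↦
    inf_le_inf_left _ hxW (hB'.span_inter_ker ▸ subset_span hv)
  have hK : (LinearMap.ker x ⊓ W).IsHomogeneous 𝒱 := fun i v hv ↦
    mem_inf.mpr ⟨isHomogeneous_ker hx i hv.1, hW i hv.2⟩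
  obtain ⟨C, hB'C, hC, hCspan, hCh⟩ := hK.exists_linearIndepOn_extension 𝒱 hB'K
    (hB'.linearIndepOn.mono Set.inter_subset_left) fun v hv ↦ hB'h v hv.1
  refine ⟨B' ∪ S ∪ C,
    hB'.union_preimage_union_ker hxW (fun v hv ↦ (hSsub hv).1) hS hC hCspan hB'C, ?_⟩
  rintro v ((hv | hv) | hv)
  exacts [hB'h v hv, (hSsub hv).2, hCh v hv]

end Graded

theorem exists_colored_jordan_basis_general
    {𝕜 V : Type*} [Field 𝕜] [AddCommGroup V] [Module 𝕜 V] [FiniteDimensional 𝕜 V]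
    {n : ℕ}
    (Vc : ZMod n → Submodule 𝕜 V) (hV : DirectSum.IsInternal Vc)
    (x : Module.End 𝕜 V)
    (hcol : ∀ i, Submodule.map x (Vc i) ≤ Vc (i + 1))
    (hnil : IsNilpotent x) :
    ∃ B : Set V,
      LinearIndependent 𝕜 ((↑) : B → V) ∧
      Submodule.span 𝕜 B = ⊤ ∧
      (∀ v ∈ B, ∃ i, v ∈ Vc i) ∧
      (∀ v ∈ B, x v ∈ B ∨ x v = 0) ∧
      ∃ C ⊆ B, Submodule.span 𝕜 C = LinearMap.ker x := by
  let _ : Decomposition Vc := hV.chooseDecomposition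
  obtain ⟨B, hB, hBh⟩ := Submodule.IsHomogeneous.exists_isJordanBasis
    (σ := Equiv.addRight 1) hcol hnil (W := ⊤) (fun _ _ _ ↦ mem_top) le_top
  exact ⟨B, hB.linearIndepOn, hB.span_eq, hBh, hB.mapsTo, B ∩ LinearMap.ker x,
    Set.inter_subset_left, by rw [hB.span_inter_ker, inf_top_eq]⟩

/-- Every cyclically colored nilpotent endomorphism of a colored vector
space `V = V_0 ⊕ ⋯ ⊕ V_{n−1}` (colors in `ℤ/nℤ`, `x(V_i) ⊆ V_{i+1}`) admits a colored
Jordan basis: a basis of `V` of colored vectors, stable under `x` (each basis vector is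
sent to a basis vector or to `0`), containing a basis of `ker x`. -/
theorem exists_colored_jordan_basis
    {𝕜 V : Type*} [Field 𝕜] [AddCommGroup V] [Module 𝕜 V] [FiniteDimensional 𝕜 V]
    {n : ℕ} [NeZero n]
    (Vc : ZMod n → Submodule 𝕜 V) (hV : DirectSum.IsInternal Vc)
    (x : Module.End 𝕜 V)
    (hcol : ∀ i, Submodule.map x (Vc i) ≤ Vc (i + 1))
    (hnil : IsNilpotent x) :
    ∃ B : Set V,
      LinearIndependent 𝕜 ((↑) : B → V) ∧
      Submodule.span 𝕜 B = ⊤ ∧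
      (∀ v ∈ B, ∃ i, v ∈ Vc i) ∧
      (∀ v ∈ B, x v ∈ B ∨ x v = 0) ∧
      ∃ C ⊆ B, Submodule.span 𝕜 C = LinearMap.ker x :=
  exists_colored_jordan_basis_general Vc hV x hcol hnil
end

section
/- Let (λ, μ) be a marked partition and define μ̃_i = max({μ_j : j ≥ i} ∪ {λ_i − λ_j + μ_j : j < i} ∪ {0}). Then (λ, μ̃) is a bipartition with μ̃ ≥ μ, and it is minimal: any bipartition (λ, δ) with δ ≥ μ satisfies δ ≥ μ̃. -/
/-!
Every lower bound defining `μ̃_i` is forced on a bipartition `δ ≥ μ`: `δ_i ≥ δ_j ≥ μ_j` for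
`j ≥ i` because `δ` is antitone, and `δ_i ≥ λ_i - λ_j + δ_j ≥ λ_i - λ_j + μ_j` for `j < i`
because `λ - δ` is antitone. So `μ̃ ≤ δ`, and it remains to see that `μ̃` itself is a bipartition:
each of its three conditions at a pair `i ≤ j` follows by comparing the term realising the
maximum at one index with a term of the same kind at the other.
-/

variable {ι α : Type*} [LinearOrder ι] [AddCommGroup α] [LinearOrder α]

def bipartitionCandidates (l m : ι → α) (i : ι) : Set α :=
  {z | ∃ j ≥ i, z = m j} ∪ {z | ∃ j < i, z = l i - l j + m j} ∪ {0}

structure IsBipartition (l d : ι → α) : Prop where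
  le : ∀ i, d i ≤ l i
  nonneg : ∀ i, 0 ≤ d i
  antitone : Antitone d
  antitone_sub : Antitone (l - d)

def IsBipartitionClosure (l m t : ι → α) : Prop :=
  ∀ i, IsGreatest (bipartitionCandidates l m i) (t i)

namespace IsBipartitionClosure

variable {l m t : ι → α} (ht : IsBipartitionClosure l m t)
include ht

theorem apply_le_of_le {i j : ι} (hij : i ≤ j) : m j ≤ t i :=
  (ht i).2 (Or.inl (Or.inl ⟨j, hij, rfl⟩))

theorem sub_add_le_of_lt {i j : ι} (hji : j < i) : l i - l j + m j ≤ t i :=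
  (ht i).2 (Or.inl (Or.inr ⟨j, hji, rfl⟩))

theorem nonneg (i : ι) : 0 ≤ t i :=
  (ht i).2 (Or.inr rfl)

theorem le_self : m ≤ t :=
  fun _ => ht.apply_le_of_le le_rfl

theorem cases (i : ι) :
    (∃ j ≥ i, t i = m j) ∨ (∃ j < i, t i = l i - l j + m j) ∨ t i = 0 :=
  or_assoc.mp (ht i).1

variable [IsOrderedAddMonoid α]

theorem le (hl : Antitone l) (hl₀ : ∀ i, 0 ≤ l i) (hm : ∀ i, m i ≤ l i) (i : ι) : t i ≤ l i := by
  rcases ht.cases i with ⟨j, hij, h⟩ | ⟨j, -, h⟩ | h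
  · exact h ▸ (hm j).trans (hl hij)
  · have := hm j
    grind
  · exact h ▸ hl₀ i

theorem antitone (hl : Antitone l) : Antitone t := by
  intro i i' hii'
  rcases ht.cases i' with ⟨j, hj, h⟩ | ⟨j, hj, h⟩ | h
  · exact h ▸ ht.apply_le_of_le (hii'.trans hj)
  · rcases lt_or_ge j i with hji | hij
    · have := ht.sub_add_le_of_lt hji
      have := hl hii'
      grind
    · have := ht.apply_le_of_le hij
      have := hl hj.le
      grind
  · exact h ▸ ht.nonneg i

theorem antitone_sub (hl : Antitone l) : Antitone (l - t) := by
  intro i j hij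
  simp only [Pi.sub_apply]
  rcases ht.cases i with ⟨k, hik, h⟩ | ⟨k, hki, h⟩ | h
  · rcases le_or_gt j k with hjk | hkj
    · have := ht.apply_le_of_le hjk
      have := hl hij
      grind
    · have := ht.sub_add_le_of_lt hkj
      have := hl hik
      grind
  · have := ht.sub_add_le_of_lt (hki.trans_le hij)
    grind
  · have := ht.nonneg j
    have := hl hij
    grind

theorem isBipartition (hl : Antitone l) (hl₀ : ∀ i, 0 ≤ l i) (hm : ∀ i, m i ≤ l i) :
    IsBipartition l t :=
  ⟨ht.le hl hl₀ hm, ht.nonneg, ht.antitone hl, ht.antitone_sub hl⟩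

theorem le_of_isBipartition {d : ι → α} (hd : IsBipartition l d) (hmd : m ≤ d) : t ≤ d := by
  intro i
  rcases ht.cases i with ⟨j, hij, h⟩ | ⟨j, hji, h⟩ | h
  · exact h ▸ (hmd j).trans (hd.antitone hij)
  · have hsub : l i - d i ≤ l j - d j := hd.antitone_sub hji.le
    have := hmd j
    grind
  · exact h ▸ hd.nonneg i

end IsBipartitionClosure

theorem minimal_bipartition_general
    (lam : ℕ → ℕ) (hlam : Antitone lam)
    (mu : ℕ → ℤ) (hmu : ∀ i, mu i ≤ (lam i : ℤ))
    (muT : ℕ → ℤ)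
    (hmuT : ∀ i, IsGreatest
      ({z : ℤ | ∃ j ≥ i, z = mu j} ∪
       {z : ℤ | ∃ j < i, z = (lam i : ℤ) - (lam j : ℤ) + mu j} ∪ {0}) (muT i)) :
    (∀ i, muT i ≤ (lam i : ℤ)) ∧
    (∀ i, 0 ≤ muT i) ∧
    Antitone muT ∧
    (∀ i j, i ≤ j → (lam j : ℤ) - muT j ≤ (lam i : ℤ) - muT i) ∧
    (∀ i, mu i ≤ muT i) ∧
    (∀ delta : ℕ → ℤ, (∀ i, delta i ≤ (lam i : ℤ)) → (∀ i, 0 ≤ delta i) →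
      Antitone delta →
      (∀ i j, i ≤ j → (lam j : ℤ) - delta j ≤ (lam i : ℤ) - delta i) →
      (∀ i, mu i ≤ delta i) → ∀ i, muT i ≤ delta i) := by
  have hT : IsBipartitionClosure (fun i => (lam i : ℤ)) mu muT := hmuT
  obtain ⟨hle, hnonneg, hanti, hanti_sub⟩ :=
    hT.isBipartition (Nat.mono_cast.comp_antitone hlam) (fun i => Int.natCast_nonneg _) hmu
  exact ⟨hle, hnonneg, hanti, hanti_sub, hT.le_self,
    fun delta hle' hnonneg' hanti' hanti_sub' hmu' =>
      hT.le_of_isBipartition ⟨hle', hnonneg', hanti', hanti_sub'⟩ hmu'⟩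

/-- For a marked partition `(λ, μ)`, define
`μ̃_i = max({μ_j : j ≥ i} ∪ {λ_i − λ_j + μ_j : j < i} ∪ {0})` (expressed via
`IsGreatest`).  Then `(λ, μ̃)` is a bipartition with `μ̃ ≥ μ`, and it is minimal:
any bipartition `(λ, δ)` with `δ ≥ μ` satisfies `δ ≥ μ̃`. -/
theorem minimal_bipartition
    (lam : ℕ → ℕ) (hlam : Antitone lam) (hfin : ∃ N, ∀ i ≥ N, lam i = 0)
    (mu : ℕ → ℤ) (hmu : ∀ i, mu i ≤ (lam i : ℤ))
    (muT : ℕ → ℤ)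
    (hmuT : ∀ i, IsGreatest
      ({z : ℤ | ∃ j ≥ i, z = mu j} ∪
       {z : ℤ | ∃ j < i, z = (lam i : ℤ) - (lam j : ℤ) + mu j} ∪ {0}) (muT i)) :
    (∀ i, muT i ≤ (lam i : ℤ)) ∧
    (∀ i, 0 ≤ muT i) ∧
    Antitone muT ∧
    (∀ i j, i ≤ j → (lam j : ℤ) - muT j ≤ (lam i : ℤ) - muT i) ∧
    (∀ i, mu i ≤ muT i) ∧
    (∀ delta : ℕ → ℤ, (∀ i, delta i ≤ (lam i : ℤ)) → (∀ i, 0 ≤ delta i) →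
      Antitone delta →
      (∀ i j, i ≤ j → (lam j : ℤ) - delta j ≤ (lam i : ℤ) - delta i) →
      (∀ i, mu i ≤ delta i) → ∀ i, muT i ≤ delta i) :=
  minimal_bipartition_general lam hlam mu hmu muT hmuT
end

section
/- A marked partition (λ, μ) is a k-quasi-bipartition if and only if its minimal bipartition (λ, μ̃) satisfies 0 ≤ μ̃_i − μ_i < k for every i. -/
/-!
`μ̃_i` is the largest element of a set containing `μ_i`, so `μ_i ≤ μ̃_i` always, and
`μ̃_i < μ_i + k` says that every candidate in that set is below `μ_i + k`. Unfolding the three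
kinds of candidates gives exactly the three families of inequalities defining a
`k`-quasi-bipartition: `μ_j < μ_i + k` for `j ≥ i`, `ν_i < ν_j + k` for `j < i`, and `-k < μ_i`
(the candidate `j = i` is where `0 < k` enters).
-/

namespace MarkedPartition

def minMarkingCandidates (lam : ℕ → ℕ) (mu : ℕ → ℤ) (i : ℕ) : Set ℤ :=
  {z : ℤ | ∃ j ≥ i, z = mu j} ∪
    {z : ℤ | ∃ j < i, z = (lam i : ℤ) - (lam j : ℤ) + mu j} ∪ {0}

def IsQuasiBipartition (k : ℕ) (lam : ℕ → ℕ) (mu : ℕ → ℤ) : Prop :=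
  (∀ i, -(k : ℤ) < mu i) ∧
    (∀ i j, i < j → mu j < mu i + k ∧ (lam j : ℤ) - mu j < (lam i : ℤ) - mu i + k)

variable {lam : ℕ → ℕ} {mu : ℕ → ℤ}

theorem self_mem_minMarkingCandidates (i : ℕ) : mu i ∈ minMarkingCandidates lam mu i :=
  Or.inl (Or.inl ⟨i, le_rfl, rfl⟩)

theorem forall_mem_minMarkingCandidates_lt_iff (i : ℕ) (c : ℤ) :
    (∀ z ∈ minMarkingCandidates lam mu i, z < c) ↔
      (∀ j ≥ i, mu j < c) ∧ (∀ j < i, (lam i : ℤ) - lam j + mu j < c) ∧ 0 < c := by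
  constructor
  · intro h
    exact ⟨fun j hj => h _ (Or.inl (Or.inl ⟨j, hj, rfl⟩)),
      fun j hj => h _ (Or.inl (Or.inr ⟨j, hj, rfl⟩)), h 0 (Or.inr rfl)⟩
  · rintro ⟨hge, hlt, hzero⟩ z ((⟨j, hj, rfl⟩ | ⟨j, hj, rfl⟩) | rfl)
    exacts [hge j hj, hlt j hj, hzero]

theorem isQuasiBipartition_iff_forall_mem_minMarkingCandidates_lt {k : ℕ} (hk : 0 < k) :
    IsQuasiBipartition k lam mu ↔ ∀ i, ∀ z ∈ minMarkingCandidates lam mu i, z < mu i + k := by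
  simp only [forall_mem_minMarkingCandidates_lt_iff]
  constructor
  · rintro ⟨hpos, hpair⟩ i
    refine ⟨fun j hij => ?_, fun j hji => ?_, by linarith [hpos i]⟩
    · rcases hij.eq_or_lt with rfl | hij
      · omega
      · exact (hpair i j hij).1
    · linarith [(hpair j i hji).2]
  · intro h
    refine ⟨fun i => by linarith [(h i).2.2], fun i j hij => ⟨(h i).1 j hij.le, ?_⟩⟩
    linarith [(h j).2.1 i hij]

end MarkedPartition

theorem quasi_bipartition_iff_general
    (k : ℕ) (hk : 0 < k)
    (lam : ℕ → ℕ)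
    (mu : ℕ → ℤ)
    (muT : ℕ → ℤ)
    (hmuT : ∀ i, IsGreatest
      ({z : ℤ | ∃ j ≥ i, z = mu j} ∪
       {z : ℤ | ∃ j < i, z = (lam i : ℤ) - (lam j : ℤ) + mu j} ∪ {0}) (muT i)) :
    ((∀ i, -(k : ℤ) < mu i) ∧
      (∀ i j, i < j → mu j < mu i + k ∧
        (lam j : ℤ) - mu j < (lam i : ℤ) - mu i + k)) ↔
    (∀ i, 0 ≤ muT i - mu i ∧ muT i - mu i < k) := by
  change MarkedPartition.IsQuasiBipartition k lam mu ↔ _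
  rw [MarkedPartition.isQuasiBipartition_iff_forall_mem_minMarkingCandidates_lt hk]
  refine forall_congr' fun i => ?_
  have hgreatest : IsGreatest (MarkedPartition.minMarkingCandidates lam mu i) (muT i) := hmuT i
  have hle : mu i ≤ muT i := hgreatest.2 (MarkedPartition.self_mem_minMarkingCandidates i)
  rw [← hgreatest.lt_iff]
  omega

/-- A marked partition `(λ, μ)` is a `k`-quasi-bipartition iff its
minimal bipartition marking `μ̃` (expressed via `IsGreatest`) satisfies
`0 ≤ μ̃_i − μ_i < k` for every `i`. -/
theorem quasi_bipartition_iff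
    (k : ℕ) (hk : 0 < k)
    (lam : ℕ → ℕ) (hlam : Antitone lam) (hfin : ∃ N, ∀ i ≥ N, lam i = 0)
    (mu : ℕ → ℤ) (hmu : ∀ i, mu i ≤ (lam i : ℤ))
    (muT : ℕ → ℤ)
    (hmuT : ∀ i, IsGreatest
      ({z : ℤ | ∃ j ≥ i, z = mu j} ∪
       {z : ℤ | ∃ j < i, z = (lam i : ℤ) - (lam j : ℤ) + mu j} ∪ {0}) (muT i)) :
    ((∀ i, -(k : ℤ) < mu i) ∧
      (∀ i j, i < j → mu j < mu i + k ∧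
        (lam j : ℤ) - mu j < (lam i : ℤ) - mu i + k)) ↔
    (∀ i, 0 ≤ muT i - mu i ∧ muT i - mu i < k) :=
  quasi_bipartition_iff_general k hk lam mu muT hmuT
end

section
/- For a nilpotent endomorphism x of a finite-dimensional vector space V with Jordan type λ (a partition of dim V), the centralizer E^x = {y ∈ End(V) : xy = yx} has dimension dim V + 2·Σ_{i≥1}(i−1)λ_i = Σ_{k=1}^{l(λ)} dim ker(x^{λ_k}). -/
/-!
Through `x`, `V` is a finitely generated `X`-power torsion `𝕜[X]`-module, hence
`V ≅ ⨁ᵢ 𝕜[X] ⧸ (X ^ kᵢ)`. As `Hom(R ⧸ (r), M)` is the `r`-torsion of `M`, this gives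
`dim E^x = dim End_{𝕜[X]} V = ∑ᵢ dim ker x^{kᵢ}` and `dim ker xᵗ = ∑ᵢ min kᵢ t`, the last because
multiplication by `X ^ t` on `𝕜[X] ⧸ (X ^ a)` has kernel and cokernel of equal dimension, and the
cokernel is `𝕜[X] ⧸ (X ^ min a t)`.
Comparing with `dim ker xᵗ = ∑ⱼ min λⱼ t`, the symmetry of `min` turns
`∑ᵢ dim ker x^{kᵢ} = ∑ᵢ ∑ⱼ min λⱼ kᵢ` into `∑ⱼ dim ker x^{λⱼ}` without identifying `k` with `λ`.
For antitone `λ` the double sum `∑ᵢ ∑ⱼ min λᵢ λⱼ` is `∑ᵢ λᵢ + 2 ∑ᵢ i λᵢ`.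
-/

open Module Submodule Polynomial

namespace LinearMap

variable {R S M ι : Type*} {φ : ι → Type*} [Semiring R] [Semiring S]
  [AddCommMonoid M] [Module R M] [∀ i, AddCommMonoid (φ i)] [∀ i, Module R (φ i)]
  [∀ i, Module S (φ i)] [∀ i, SMulCommClass R S (φ i)]

def piEquiv : ((i : ι) → M →ₗ[R] φ i) ≃ₗ[S] (M →ₗ[R] (i : ι) → φ i) where
  toFun := pi
  invFun f i := proj i ∘ₗ f
  map_add' _ _ := rfl
  map_smul' _ _ := rfl
  left_inv _ := rfl
  right_inv _ := rfl

end LinearMap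

section Torsion

variable {S R M : Type*} [CommSemiring S] [CommRing R] [Algebra S R]
  [AddCommGroup M] [Module R M] [Module S M] [IsScalarTower S R M]

noncomputable def quotSpanSingletonLinearMapEquivTorsionBy (r : R) :
    ((R ⧸ R ∙ r) →ₗ[R] M) ≃ₗ[S] torsionBy R M r where
  toFun f := ⟨f (Submodule.Quotient.mk 1), by
    rw [mem_torsionBy_iff, ← map_smul, ← Submodule.Quotient.mk_smul, smul_eq_mul, mul_one,
      (Submodule.Quotient.mk_eq_zero _).mpr (mem_span_singleton_self r), map_zero]⟩
  invFun m := liftQSpanSingleton r (LinearMap.toSpanSingleton R M m) (by simp)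
  left_inv f := by
    refine Submodule.linearMap_qext _ (LinearMap.ext fun p => ?_)
    simp only [LinearMap.comp_apply, mkQ_apply]
    rw [liftQSpanSingleton_apply, LinearMap.toSpanSingleton_apply, ← map_smul,
      ← Submodule.Quotient.mk_smul, smul_eq_mul, mul_one]
  right_inv m := by
    ext
    change liftQSpanSingleton r _ _ (Submodule.Quotient.mk 1) = _
    rw [liftQSpanSingleton_apply, LinearMap.toSpanSingleton_apply, one_smul]
  map_add' _ _ := rfl
  map_smul' _ _ := rfl

open scoped Pointwise in
noncomputable def quotSMulTopQuotientEquiv (r : R) (I : Ideal R) :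
    QuotSMulTop r (R ⧸ I) ≃ₗ[R] R ⧸ (I ⊔ R ∙ r) :=
  (Submodule.quotEquivOfEq _ _ (by
      rw [Ideal.Quotient.smul_top, Submodule.map_span, Set.image_singleton, mkQ_apply])).trans
    (Submodule.quotientQuotientEquivQuotientSup I (R ∙ r))

end Torsion

section FiniteDimensional

variable {K R : Type*} [Field K] [CommRing R] [Algebra K R]
  {M : Type*} [AddCommGroup M] [Module R M] [Module K M] [IsScalarTower K R M]

instance Submodule.finiteDimensional_of_isScalarTower [FiniteDimensional K M]
    (p : Submodule R M) : FiniteDimensional K p :=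
  Module.Finite.of_injective (p.subtype.restrictScalars K) Subtype.val_injective

open scoped Pointwise in
theorem finrank_torsionBy_eq_finrank_quotSMulTop [FiniteDimensional K M] (r : R) :
    finrank K (torsionBy R M r) = finrank K (QuotSMulTop r M) := by
  let f := (DistribSMul.toLinearMap R M r).restrictScalars K
  have hker : finrank K (torsionBy R M r) = finrank K (LinearMap.ker f) := rfl
  have hrange : (r • ⊤ : Submodule R M).restrictScalars K = LinearMap.range f := by
    rw [pointwise_smul_def, Submodule.map_top]
    rfl
  have hcoker : finrank K (QuotSMulTop r M) = finrank K (M ⧸ LinearMap.range f) := by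
    rw [← hrange, (Submodule.Quotient.restrictScalarsEquiv K _).finrank_eq]
  have := LinearMap.finrank_range_add_finrank_ker f
  have := (LinearMap.range f).finrank_quotient_add_finrank
  omega

theorem finrank_torsionBy_eq_sum_of_equiv_pi {ι : Type*} [Fintype ι] {N : ι → Type*}
    [∀ i, AddCommGroup (N i)] [∀ i, Module R (N i)] [∀ i, Module K (N i)]
    [∀ i, IsScalarTower K R (N i)] [∀ i, FiniteDimensional K (N i)]
    (e : M ≃ₗ[R] (i : ι) → N i) (r : R) :
    finrank K (torsionBy R M r) = ∑ i, finrank K (torsionBy R (N i) r) := by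
  let E : torsionBy R M r ≃ₗ[K] (i : ι) → torsionBy R (N i) r :=
    (quotSpanSingletonLinearMapEquivTorsionBy r).symm ≪≫ₗ
      (LinearEquiv.congrRight e).restrictScalars K ≪≫ₗ LinearMap.piEquiv.symm ≪≫ₗ
      LinearEquiv.piCongrRight fun _ => quotSpanSingletonLinearMapEquivTorsionBy r
  rw [E.finrank_eq, finrank_pi_fintype]

theorem finrank_linearMap_eq_sum_of_equiv_pi {ι : Type*} [Fintype ι] {L : Type*}
    [AddCommGroup L] [Module R L] (r : ι → R) (e : L ≃ₗ[R] (i : ι) → R ⧸ R ∙ r i)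
    [FiniteDimensional K M] :
    finrank K (L →ₗ[R] M) = ∑ i, finrank K (torsionBy R M (r i)) := by
  classical
  let E : (L →ₗ[R] M) ≃ₗ[K] (i : ι) → torsionBy R M (r i) :=
    (e.arrowCongr (LinearEquiv.refl R M)).restrictScalars K ≪≫ₗ (LinearMap.lsum R _ K).symm ≪≫ₗ
      LinearEquiv.piCongrRight fun i => quotSpanSingletonLinearMapEquivTorsionBy (r i)
  rw [E.finrank_eq, finrank_pi_fintype]

end FiniteDimensional

section QuotientSpanXPow

variable {K : Type*} [Field K]

theorem span_X_pow_sup_span_X_pow (a t : ℕ) :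
    (K[X] ∙ (X ^ a : K[X])) ⊔ K[X] ∙ (X ^ t : K[X]) = K[X] ∙ (X ^ min a t : K[X]) := by
  rcases le_total a t with h | h
  · rw [min_eq_left h, sup_eq_left, Ideal.span_singleton_le_span_singleton]
    exact pow_dvd_pow X h
  · rw [min_eq_right h, sup_eq_right, Ideal.span_singleton_le_span_singleton]
    exact pow_dvd_pow X h

instance finiteDimensional_quotient_span_X_pow (c : ℕ) :
    FiniteDimensional K (K[X] ⧸ K[X] ∙ (X ^ c : K[X])) :=
  (AdjoinRoot.powerBasis' (monic_X_pow c)).finite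

theorem finrank_torsionBy_X_pow_quotient_span_X_pow (a t : ℕ) :
    finrank K (torsionBy K[X] (K[X] ⧸ K[X] ∙ (X ^ a : K[X])) (X ^ t)) = min a t := by
  rw [finrank_torsionBy_eq_finrank_quotSMulTop,
    ((quotSMulTopQuotientEquiv _ _).restrictScalars K).finrank_eq, span_X_pow_sup_span_X_pow]
  exact finrank_quotient_span_eq_natDegree.trans (natDegree_X_pow _)

end QuotientSpanXPow

namespace Module.AEval'

variable {R M : Type*} [CommRing R] [AddCommGroup M] [Module R M] (φ : Module.End R M)

noncomputable def torsionByEquivKer (p : R[X]) :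
    torsionBy R[X] (AEval' φ) p ≃ₗ[R] LinearMap.ker (aeval φ p) :=
  (AEval'.of φ).symm.ofSubmodules ((torsionBy R[X] (AEval' φ) p).restrictScalars R) _ <| by
    ext m
    rw [Submodule.mem_map_equiv, LinearEquiv.symm_symm, restrictScalars_mem, mem_torsionBy_iff,
      ← AEval.of_aeval_smul, LinearEquiv.map_eq_zero_iff, LinearMap.mem_ker, Module.End.smul_def]

noncomputable def centralizerEquiv :
    Subalgebra.centralizer R {φ} ≃ₗ[R] (AEval' φ →ₗ[R[X]] AEval' φ) where
  toFun y := LinearMap.ofAEval φ ((AEval'.of φ).toLinearMap ∘ₗ (y : Module.End R M)) fun m => by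
    have hy : y * φ = φ * y := ((Subalgebra.mem_centralizer_iff R).mp y.2 φ rfl).symm
    simp only [LinearMap.comp_apply, LinearEquiv.coe_coe, X_smul_of, Module.End.smul_def,
      ← Module.End.mul_apply, hy]
  invFun f := ⟨(AEval'.of φ).symm.toLinearMap ∘ₗ f.restrictScalars R ∘ₗ (AEval'.of φ).toLinearMap,
    by
      rw [Subalgebra.mem_centralizer_iff]
      rintro _ rfl
      ext m
      simp only [Module.End.mul_apply, LinearMap.comp_apply, LinearEquiv.coe_coe,
        LinearMap.coe_restrictScalars]
      rw [← of_symm_X_smul, ← map_smul, X_smul_of]⟩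
  left_inv _ := rfl
  right_inv _ := rfl
  map_add' _ _ := rfl
  map_smul' _ _ := rfl

end Module.AEval'

namespace IsNilpotent

variable {K V : Type*} [Field K] [AddCommGroup V] [Module K V] [FiniteDimensional K V]
  {x : Module.End K V}

theorem exists_aevalEquiv_pi_quotient_span_X_pow (hx : IsNilpotent x) :
    ∃ (d : ℕ) (k : Fin d → ℕ),
      Nonempty (AEval' x ≃ₗ[K[X]] (i : Fin d) → K[X] ⧸ K[X] ∙ (X ^ k i : K[X])) := by
  obtain ⟨n, hn⟩ := hx
  have htorsion : IsTorsion' (AEval' x) (Submonoid.powers (X : K[X])) := fun m =>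
    ⟨⟨X ^ n, n, rfl⟩, by
      obtain ⟨v, rfl⟩ := (AEval'.of x).surjective m
      rw [Submonoid.smul_def, AEval'.X_pow_smul_of, hn, zero_smul, map_zero]⟩
  obtain ⟨d, k, ⟨e⟩⟩ := torsion_by_prime_power_decomposition irreducible_X htorsion
  exact ⟨d, k, ⟨e.trans (DirectSum.linearEquivFunOnFintype _ _ _)⟩⟩

theorem exists_finrank_ker_pow_and_finrank_centralizer (hx : IsNilpotent x) :
    ∃ (d : ℕ) (k : Fin d → ℕ),
      (∀ t, finrank K (LinearMap.ker (x ^ t)) = ∑ i, min (k i) t) ∧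
      finrank K (Subalgebra.centralizer K {x}) = ∑ i, finrank K (LinearMap.ker (x ^ k i)) := by
  obtain ⟨d, k, ⟨e⟩⟩ := hx.exists_aevalEquiv_pi_quotient_span_X_pow
  have hker (t : ℕ) : finrank K (LinearMap.ker (x ^ t)) =
      finrank K (torsionBy K[X] (AEval' x) (X ^ t)) := by
    rw [(AEval'.torsionByEquivKer x _).finrank_eq, map_pow, aeval_X]
  refine ⟨d, k, fun t => ?_, ?_⟩
  · simp only [hker, finrank_torsionBy_eq_sum_of_equiv_pi e,
      finrank_torsionBy_X_pow_quotient_span_X_pow]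
  · rw [(AEval'.centralizerEquiv x).finrank_eq, finrank_linearMap_eq_sum_of_equiv_pi _ e]
    simp only [hker]

end IsNilpotent

open Finset

theorem Finsupp.support_subset_range_card_of_antitone {M : Type*} [AddCommMonoid M]
    [PartialOrder M] [CanonicallyOrderedAdd M] {f : ℕ →₀ M} (hf : Antitone f) :
    f.support ⊆ range #f.support := by
  intro i hi
  have hsub : range (i + 1) ⊆ f.support := fun j hj => by
    rw [Finsupp.mem_support_iff] at hi ⊢
    intro hj0
    exact hi (nonpos_iff_eq_zero.mp (hj0 ▸ hf (Nat.lt_succ_iff.mp (mem_range.mp hj))))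
  simpa using card_le_card hsub

theorem sum_range_sum_range_min_of_antitone {f : ℕ → ℕ} (hf : Antitone f) (n : ℕ) :
    ∑ i ∈ range n, ∑ j ∈ range n, min (f i) (f j) =
      ∑ i ∈ range n, f i + 2 * ∑ i ∈ range n, i * f i := by
  induction n with
  | zero => simp
  | succ n ih =>
    have hle : ∀ i ∈ range n, f n ≤ f i := fun i hi => hf (mem_range.mp hi).le
    simp only [sum_range_succ, sum_add_distrib, ih, min_self]
    rw [sum_congr rfl fun i hi => min_eq_right (hle i hi),
      sum_congr rfl fun i hi => min_eq_left (hle i hi), sum_const, card_range, smul_eq_mul]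
    ring

/-- Rows of `λ` are indexed from `0`, so the paper's `(i−1)λᵢ` is `i * lam i` here. -/
theorem centralizer_dimension
    {𝕜 V : Type*} [Field 𝕜] [AddCommGroup V] [Module 𝕜 V] [FiniteDimensional 𝕜 V]
    (x : Module.End 𝕜 V) (hx : IsNilpotent x)
    (lam : ℕ →₀ ℕ) (hlam : Antitone ⇑lam)
    (hker : ∀ k : ℕ, finrank 𝕜 ↥(LinearMap.ker (x ^ k))
        = lam.sum fun _ m => min m k) :
    finrank 𝕜 ↥(Subalgebra.centralizer 𝕜 ({x} : Set (Module.End 𝕜 V)))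
        = finrank 𝕜 V + 2 * (lam.sum fun i m => i * m) ∧
    finrank 𝕜 ↥(Subalgebra.centralizer 𝕜 ({x} : Set (Module.End 𝕜 V)))
        = ∑ k ∈ Finset.range lam.support.card,
            finrank 𝕜 ↥(LinearMap.ker (x ^ lam k)) := by
  obtain ⟨d, k, hker_k, hcent_k⟩ := hx.exists_finrank_ker_pow_and_finrank_centralizer
  have hsupp := Finsupp.support_subset_range_card_of_antitone hlam
  have hker_lam (t : ℕ) : finrank 𝕜 (LinearMap.ker (x ^ t)) =
      ∑ j ∈ range #lam.support, min (lam j) t :=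
    (hker t).trans (Finsupp.sum_of_support_subset _ hsupp _ fun _ _ => zero_min t)
  have hcent_lam : finrank 𝕜 (Subalgebra.centralizer 𝕜 {x}) =
      ∑ j ∈ range #lam.support, finrank 𝕜 (LinearMap.ker (x ^ lam j)) :=
    calc finrank 𝕜 (Subalgebra.centralizer 𝕜 {x})
        _ = ∑ i, ∑ j ∈ range #lam.support, min (lam j) (k i) := by simp only [hcent_k, hker_lam]
        _ = ∑ j ∈ range #lam.support, ∑ i, min (k i) (lam j) := by
          rw [sum_comm]
          simp only [min_comm]
        _ = ∑ j ∈ range #lam.support, finrank 𝕜 (LinearMap.ker (x ^ lam j)) := by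
          simp only [hker_k]
  refine ⟨?_, hcent_lam⟩
  obtain ⟨n, hn⟩ := hx
  have hV : finrank 𝕜 V = ∑ j ∈ range #lam.support, lam j := by
    have hker_top := hker_lam (n + lam 0)
    rw [pow_add, hn, zero_mul, LinearMap.ker_zero, finrank_top] at hker_top
    exact hker_top.trans <|
      sum_congr rfl fun j _ => min_eq_left ((hlam j.zero_le).trans le_add_self)
  rw [hcent_lam, hV, Finsupp.sum_of_support_subset _ hsupp _ fun _ _ => mul_zero _,
    ← sum_range_sum_range_min_of_antitone hlam, sum_comm]
  simp only [hker_lam]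
end
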